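/- arXiv:1101.3144 — 3 statements merged into one kernel-verified Lean document; each statement's English description precedes it below -/
import Mathlib

section
/- If ρ₁ and ρ₂ are two metrics on a set X and there exist constants c₂ ≥ c₁ > 0 with c₁·ρ₂(x,y) ≤ ρ₁(x,y) ≤ c₂·ρ₂(x,y) for all x, y ∈ X, then (c₁/c₂)·m(X, ρ₂) ≤ m(X, ρ₁) ≤ (c₂/c₁)·m(X, ρ₂). -/
open scoped BigOperators Pointwise

noncomputable def edgeWeight (X : Type*) [MetricSpace X] (N : Finset X) : Sym2 N → ℝ :=
  Sym2.lift ⟨fun a b => dist (a : X) (b : X), fun _ _ => dist_comm _ _⟩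

noncomputable def mstWeight (X : Type*) [MetricSpace X] (N : Finset X) : ℝ :=
  sInf { w : ℝ | ∃ E : Finset (Sym2 N),
    (SimpleGraph.fromEdgeSet (E : Set (Sym2 N))).Connected ∧ w = ∑ e ∈ E, edgeWeight X N e }

noncomputable def smtWeight (X : Type*) [MetricSpace X] (N : Finset X) : ℝ :=
  sInf { w : ℝ | ∃ M : Finset X, N ⊆ M ∧ w = mstWeight X M }

noncomputable def steinerRatio (X : Type*) [MetricSpace X] : ℝ :=
  sInf { r : ℝ | ∃ N : Finset X, 0 < mstWeight X N ∧ r = smtWeight X N / mstWeight X N }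

section Aux
variable {X : Type*}

lemma edgeWeight_nonneg (ρ : MetricSpace X) (N : Finset X) (e : Sym2 N) :
    0 ≤ @edgeWeight X ρ N e := by
  induction e using Sym2.ind with
  | _ a b =>
    simp only [edgeWeight, Sym2.lift_mk]
    exact @dist_nonneg X ρ.toPseudoMetricSpace _ _

lemma mstWeight_nonneg (ρ : MetricSpace X) (N : Finset X) : 0 ≤ @mstWeight X ρ N := by
  apply Real.sInf_nonneg
  rintro w ⟨E, -, rfl⟩
  exact Finset.sum_nonneg fun e _ => edgeWeight_nonneg ρ N e

lemma smtWeight_nonneg (ρ : MetricSpace X) (N : Finset X) : 0 ≤ @smtWeight X ρ N := by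
  apply Real.sInf_nonneg
  rintro w ⟨M, -, rfl⟩
  exact mstWeight_nonneg ρ M

lemma mstWeight_le (ρa ρb : MetricSpace X) (c : ℝ) (hc : 0 ≤ c)
    (h : ∀ x y, @dist X ρa.toDist x y ≤ c * @dist X ρb.toDist x y)
    (N : Finset X) : @mstWeight X ρa N ≤ c * @mstWeight X ρb N := by
  have hew : ∀ e : Sym2 N, @edgeWeight X ρa N e ≤ c * @edgeWeight X ρb N e := by
    intro e
    induction e using Sym2.ind with
    | _ a b =>
      simp only [edgeWeight, Sym2.lift_mk]
      exact h a b
  by_cases hE : ∃ E : Finset (Sym2 N),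
      (SimpleGraph.fromEdgeSet (E : Set (Sym2 N))).Connected
  · obtain ⟨E0, hE0⟩ := hE
    have hbdd : BddBelow { w : ℝ | ∃ E : Finset (Sym2 N),
        (SimpleGraph.fromEdgeSet (E : Set (Sym2 N))).Connected ∧
          w = ∑ e ∈ E, @edgeWeight X ρa N e } := by
      refine ⟨0, ?_⟩
      rintro w ⟨E, -, rfl⟩
      exact Finset.sum_nonneg fun e _ => edgeWeight_nonneg ρa N e
    rw [mstWeight, mstWeight, show c * sInf _ = sInf (c • { w : ℝ | ∃ E : Finset (Sym2 N),
        (SimpleGraph.fromEdgeSet (E : Set (Sym2 N))).Connected ∧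
          w = ∑ e ∈ E, @edgeWeight X ρb N e }) from by
      rw [Real.sInf_smul_of_nonneg hc, smul_eq_mul]]
    refine le_csInf ⟨c • (∑ e ∈ E0, @edgeWeight X ρb N e), Set.smul_mem_smul_set ⟨E0, hE0, rfl⟩⟩ ?_
    rintro y ⟨w, ⟨E, hconn, rfl⟩, rfl⟩
    refine le_trans (csInf_le hbdd ⟨E, hconn, rfl⟩) ?_
    simp only [smul_eq_mul, Finset.mul_sum]
    exact Finset.sum_le_sum fun e _ => hew e
  · have hempty : ∀ ρ : MetricSpace X, { w : ℝ | ∃ E : Finset (Sym2 N),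
        (SimpleGraph.fromEdgeSet (E : Set (Sym2 N))).Connected ∧
          w = ∑ e ∈ E, @edgeWeight X ρ N e } = ∅ := by
      intro ρ
      ext w
      simp only [Set.mem_setOf_eq, Set.mem_empty_iff_false, iff_false]
      rintro ⟨E, hconn, -⟩
      exact hE ⟨E, hconn⟩
    rw [mstWeight, mstWeight, hempty, hempty, Real.sInf_empty, mul_zero]

lemma smtWeight_le (ρa ρb : MetricSpace X) (c : ℝ) (hc : 0 ≤ c)
    (h : ∀ x y, @dist X ρa.toDist x y ≤ c * @dist X ρb.toDist x y)
    (N : Finset X) : @smtWeight X ρa N ≤ c * @smtWeight X ρb N := by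
  have hbdd : BddBelow { w : ℝ | ∃ M : Finset X, N ⊆ M ∧ w = @mstWeight X ρa M } := by
    refine ⟨0, ?_⟩
    rintro w ⟨M, -, rfl⟩
    exact mstWeight_nonneg ρa M
  rw [smtWeight, smtWeight, show c * sInf _ = sInf (c • { w : ℝ | ∃ M : Finset X,
      N ⊆ M ∧ w = @mstWeight X ρb M }) from by
    rw [Real.sInf_smul_of_nonneg hc, smul_eq_mul]]
  refine le_csInf ⟨c • @mstWeight X ρb N, Set.smul_mem_smul_set ⟨N, subset_rfl, rfl⟩⟩ ?_
  rintro y ⟨w, ⟨M, hM, rfl⟩, rfl⟩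
  refine le_trans (csInf_le hbdd ⟨M, hM, rfl⟩) ?_
  simp only [smul_eq_mul]
  exact mstWeight_le ρa ρb c hc h M

lemma steinerRatio_le (ρa ρb : MetricSpace X) (ca cb : ℝ) (hca : 0 < ca) (hcb : ca ≤ cb)
    (hlow : ∀ x y, ca * @dist X ρb.toDist x y ≤ @dist X ρa.toDist x y)
    (hup : ∀ x y, @dist X ρa.toDist x y ≤ cb * @dist X ρb.toDist x y) :
    @steinerRatio X ρa ≤ cb / ca * @steinerRatio X ρb := by
  have hcb0 : 0 < cb := lt_of_lt_of_le hca hcb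
  have hC : 0 ≤ cb / ca := le_of_lt (div_pos hcb0 hca)
  -- mst comparisons
  have hba : ∀ N : Finset X, @mstWeight X ρb N ≤ ca⁻¹ * @mstWeight X ρa N :=
    mstWeight_le ρb ρa ca⁻¹ (le_of_lt (inv_pos.mpr hca))
      (fun x y => by
        calc @dist X ρb.toDist x y = ca⁻¹ * (ca * @dist X ρb.toDist x y) := by field_simp
          _ ≤ ca⁻¹ * @dist X ρa.toDist x y :=
            mul_le_mul_of_nonneg_left (hlow x y) (le_of_lt (inv_pos.mpr hca)))
  have hab : ∀ N : Finset X, @mstWeight X ρa N ≤ cb * @mstWeight X ρb N :=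
    mstWeight_le ρa ρb cb (le_of_lt hcb0) hup
  have hsab : ∀ N : Finset X, @smtWeight X ρa N ≤ cb * @smtWeight X ρb N :=
    smtWeight_le ρa ρb cb (le_of_lt hcb0) hup
  have hposb : ∀ N : Finset X, 0 < @mstWeight X ρb N → 0 < @mstWeight X ρa N := by
    intro N hN
    have h1 := hba N
    nlinarith [mstWeight_nonneg ρa N, inv_pos.mpr hca]
  by_cases hR : ∃ N : Finset X, 0 < @mstWeight X ρb N ∧
      (@smtWeight X ρb N / @mstWeight X ρb N : ℝ) =
        @smtWeight X ρb N / @mstWeight X ρb N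
  · obtain ⟨N0, hN0, -⟩ := hR
    have hbdd : BddBelow { r : ℝ | ∃ N : Finset X, 0 < @mstWeight X ρa N ∧
        r = @smtWeight X ρa N / @mstWeight X ρa N } := by
      refine ⟨0, ?_⟩
      rintro r ⟨N, hN, rfl⟩
      exact div_nonneg (smtWeight_nonneg ρa N) (le_of_lt hN)
    rw [steinerRatio, steinerRatio, show cb / ca * sInf _ = sInf ((cb / ca) •
        { r : ℝ | ∃ N : Finset X, 0 < @mstWeight X ρb N ∧
          r = @smtWeight X ρb N / @mstWeight X ρb N }) from by
      rw [Real.sInf_smul_of_nonneg hC, smul_eq_mul]]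
    refine le_csInf ⟨(cb / ca) • (@smtWeight X ρb N0 / @mstWeight X ρb N0),
      Set.smul_mem_smul_set ⟨N0, hN0, rfl⟩⟩ ?_
    rintro y ⟨r, ⟨N, hN, rfl⟩, rfl⟩
    have hNa : 0 < @mstWeight X ρa N := hposb N hN
    refine le_trans (csInf_le hbdd ⟨N, hNa, rfl⟩) ?_
    simp only [smul_eq_mul]
    have key : @smtWeight X ρa N / @mstWeight X ρa N ≤
        (cb * @smtWeight X ρb N) / (ca * @mstWeight X ρb N) := by
      refine div_le_div₀ (by nlinarith [smtWeight_nonneg ρb N]) (hsab N)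
        (by positivity) ?_
      calc ca * @mstWeight X ρb N ≤ ca * (ca⁻¹ * @mstWeight X ρa N) := by
            nlinarith [hba N]
        _ = @mstWeight X ρa N := by field_simp
    refine key.trans (le_of_eq ?_)
    field_simp
  · push_neg at hR
    have hRa : { r : ℝ | ∃ N : Finset X, 0 < @mstWeight X ρa N ∧
        r = @smtWeight X ρa N / @mstWeight X ρa N } = ∅ := by
      ext r
      simp only [Set.mem_setOf_eq, Set.mem_empty_iff_false, iff_false]
      rintro ⟨N, hN, -⟩
      have : 0 < @mstWeight X ρb N := by
        have h1 := hab N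
        nlinarith [mstWeight_nonneg ρb N, hcb0]
      exact hR N this rfl
    have hRb : { r : ℝ | ∃ N : Finset X, 0 < @mstWeight X ρb N ∧
        r = @smtWeight X ρb N / @mstWeight X ρb N } = ∅ := by
      ext r
      simp only [Set.mem_setOf_eq, Set.mem_empty_iff_false, iff_false]
      rintro ⟨N, hN, rfl⟩
      exact hR N hN rfl
    rw [steinerRatio, steinerRatio, hRa, hRb, Real.sInf_empty, mul_zero]

end Aux

theorem steinerRatio_equiv_metrics {X : Type*} (ρ₁ ρ₂ : MetricSpace X)
    (c₁ c₂ : ℝ) (hc₁ : 0 < c₁) (hc : c₁ ≤ c₂)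
    (h : ∀ x y : X, c₁ * @dist X ρ₂.toDist x y ≤ @dist X ρ₁.toDist x y ∧
      @dist X ρ₁.toDist x y ≤ c₂ * @dist X ρ₂.toDist x y) :
    c₁ / c₂ * @steinerRatio X ρ₂ ≤ @steinerRatio X ρ₁ ∧
      @steinerRatio X ρ₁ ≤ c₂ / c₁ * @steinerRatio X ρ₂ := by
  have hc₂ : 0 < c₂ := lt_of_lt_of_le hc₁ hc
  have h12 : @steinerRatio X ρ₁ ≤ c₂ / c₁ * @steinerRatio X ρ₂ :=
    steinerRatio_le ρ₁ ρ₂ c₁ c₂ hc₁ hc (fun x y => (h x y).1) (fun x y => (h x y).2)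
  have h21 : @steinerRatio X ρ₂ ≤ (c₁⁻¹) / (c₂⁻¹) * @steinerRatio X ρ₁ := by
    refine steinerRatio_le ρ₂ ρ₁ c₂⁻¹ c₁⁻¹ (inv_pos.mpr hc₂)
      (by exact inv_anti₀ hc₁ hc) (fun x y => ?_) (fun x y => ?_)
    · have := (h x y).2
      rw [← div_le_iff₀' hc₂] at this
      simpa [div_eq_inv_mul] using this
    · have := (h x y).1
      rw [← le_div_iff₀' hc₁] at this
      simpa [div_eq_inv_mul] using this
  constructor
  · have := mul_le_mul_of_nonneg_left h21 (le_of_lt (div_pos hc₁ hc₂))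
    calc c₁ / c₂ * @steinerRatio X ρ₂ ≤ c₁ / c₂ * ((c₁⁻¹) / (c₂⁻¹) * @steinerRatio X ρ₁) := this
      _ = @steinerRatio X ρ₁ := by field_simp
  · exact h12
end

section
/- Define m(r) = (3/2) · r / arccosh(1 + (3/2)·sinh²(r)). There exists ε > 0 such that m(r) < √3/2 for all r ∈ (0, ε). -/
/-- The inverse hyperbolic cosine, for arguments `1 ≤ x`. -/
noncomputable def arcosh (x : ℝ) : ℝ := Real.log (x + Real.sqrt (x ^ 2 - 1))

/-- The ratio of the length `3r` of the Steiner tree to the length `2a` of the minimal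
spanning tree of an equilateral hyperbolic triangle of circumradius `r`. -/
noncomputable def steinerRatioHyp (r : ℝ) : ℝ :=
  3 / 2 * r / arcosh (1 + 3 / 2 * Real.sinh r ^ 2)

lemma cosh_taylor {t : ℝ} (ht : |t| ≤ 1) :
    |Real.cosh t - (1 + t ^ 2 / 2 + t ^ 4 / 24)| ≤ 7 / 4320 * t ^ 6 := by
  have h1 := Real.exp_bound ht (n := 6) (by norm_num)
  have h2 := Real.exp_bound (x := -t) (by rwa [abs_neg]) (n := 6) (by norm_num)
  have hs1 : ∑ m ∈ Finset.range 6, t ^ m / m.factorial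
      = 1 + t + t ^ 2 / 2 + t ^ 3 / 6 + t ^ 4 / 24 + t ^ 5 / 120 := by
    simp [Finset.sum_range_succ, Nat.factorial]
  have hs2 : ∑ m ∈ Finset.range 6, (-t) ^ m / m.factorial
      = 1 - t + t ^ 2 / 2 - t ^ 3 / 6 + t ^ 4 / 24 - t ^ 5 / 120 := by
    simp [Finset.sum_range_succ, Nat.factorial]
    ring
  rw [hs1] at h1
  rw [hs2, abs_neg] at h2
  norm_num [Nat.factorial] at h1 h2
  have habs : |t| ^ 6 = t ^ 6 := by
    rw [← abs_pow]
    exact abs_of_nonneg (by positivity)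
  rw [habs] at h1 h2
  have e1 := abs_le.1 h1
  have e2 := abs_le.1 h2
  rw [Real.cosh_eq, abs_le]
  constructor <;> nlinarith [e1.1, e1.2, e2.1, e2.2]

lemma key {r : ℝ} (hr0 : 0 < r) (hr : r < 1 / 2) :
    Real.cosh (Real.sqrt 3 * r) < 1 + 3 / 2 * Real.sinh r ^ 2 := by
  have hs3 : Real.sqrt 3 ^ 2 = 3 := Real.sq_sqrt (by norm_num)
  have hs3pos : 0 < Real.sqrt 3 := Real.sqrt_pos.2 (by norm_num)
  have hs3lt : Real.sqrt 3 < 2 := by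
    nlinarith [hs3]
  have ht1 : |Real.sqrt 3 * r| ≤ 1 := by
    rw [abs_of_nonneg (by positivity)]
    nlinarith
  have ht2 : |2 * r| ≤ 1 := by
    rw [abs_of_nonneg (by positivity)]
    nlinarith
  have h1 := abs_le.1 (cosh_taylor ht1)
  have h2 := abs_le.1 (cosh_taylor ht2)
  have hsinh : Real.sinh r ^ 2 = (Real.cosh (2 * r) - 1) / 2 := by
    have := Real.cosh_two_mul r
    have := Real.cosh_sq r
    nlinarith
  have p4 : Real.sqrt 3 ^ 4 = 9 := by rw [show (4:ℕ) = 2*2 from rfl, pow_mul, hs3]; norm_num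
  have p6 : Real.sqrt 3 ^ 6 = 27 := by rw [show (6:ℕ) = 2*3 from rfl, pow_mul, hs3]; norm_num
  have e2 : (Real.sqrt 3 * r) ^ 2 = 3 * r ^ 2 := by rw [mul_pow, hs3]
  have e4 : (Real.sqrt 3 * r) ^ 4 = 9 * r ^ 4 := by rw [mul_pow, p4]
  have e6 : (Real.sqrt 3 * r) ^ 6 = 27 * r ^ 6 := by rw [mul_pow, p6]
  have hr2 : r ^ 2 < 1 / 4 := by nlinarith
  have h6 : r ^ 6 < r ^ 4 / 4 := by
    nlinarith [mul_lt_mul_of_pos_left hr2 (pow_pos hr0 4)]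
  rw [hsinh]
  rw [e2, e4, e6] at h1
  have g1 := h1.1
  have g2 := h2.2
  have g3 := h2.1
  nlinarith [pow_pos hr0 4]

theorem steinerRatioHyp_lt_near_zero :
    ∃ ε > (0 : ℝ), ∀ r ∈ Set.Ioo (0 : ℝ) ε, steinerRatioHyp r < Real.sqrt 3 / 2 := by
  refine ⟨1 / 2, by norm_num, fun r ⟨hr0, hr⟩ => ?_⟩
  have hs3 : Real.sqrt 3 ^ 2 = 3 := Real.sq_sqrt (by norm_num)
  have hs3pos : 0 < Real.sqrt 3 := Real.sqrt_pos.2 (by norm_num)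
  set u : ℝ := 1 + 3 / 2 * Real.sinh r ^ 2 with hu
  set t : ℝ := Real.sqrt 3 * r with htdef
  have htpos : 0 < t := by positivity
  have hcosh : Real.cosh t < u := key hr0 hr
  have hcosh1 : (1 : ℝ) ≤ Real.cosh t := Real.one_le_cosh t
  have hsinh_nonneg : 0 ≤ Real.sinh t := (Real.sinh_pos_iff.2 htpos).le
  -- arcosh u > t
  have harc : t < arcosh u := by
    have hsq : Real.sinh t < Real.sqrt (u ^ 2 - 1) := by
      have h1 : Real.sinh t ^ 2 < u ^ 2 - 1 := by
        have := Real.cosh_sq t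
        nlinarith
      nlinarith [Real.sq_sqrt (by nlinarith [sq_nonneg (Real.sinh t)] : (0:ℝ) ≤ u ^ 2 - 1),
        Real.sqrt_nonneg (u ^ 2 - 1)]
    have hexp : Real.exp t < u + Real.sqrt (u ^ 2 - 1) := by
      have := Real.cosh_add_sinh t
      linarith
    have := Real.log_lt_log (Real.exp_pos t) hexp
    rwa [Real.log_exp] at this
  have htlt : t < arcosh u := harc
  have harcpos : 0 < arcosh u := lt_trans htpos harc
  have hlt : steinerRatioHyp r < 3 / 2 * r / t := by
    unfold steinerRatioHyp
    exact div_lt_div_of_pos_left (by positivity) htpos harc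
  have heq : 3 / 2 * r / t = Real.sqrt 3 / 2 := by
    rw [htdef]
    rw [div_eq_iff (by positivity)]
    nlinarith
  rw [heq] at hlt
  exact hlt
end

section
/- The function m(r) = (3/2) · r / arccosh(1 + (3/2)·sinh²(r)) satisfies m(r) < √3/2 for every r > 0, equivalently arccosh(1 + (3/2)·sinh²(r)) > √3 · r for all r > 0. -/
lemma sinh_mul_lt (c r : ℝ) (hc0 : 0 < c) (hc1 : c < 1) (hr : 0 < r) :
    Real.sinh (c * r) < c * Real.sinh r := by
  have hmono : StrictMonoOn (fun x => c * Real.sinh x - Real.sinh (c * x)) (Set.Ici (0:ℝ)) := by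
    apply strictMonoOn_of_deriv_pos (convex_Ici 0)
    · fun_prop
    · intro x hx
      rw [interior_Ici] at hx
      have hx : 0 < x := hx
      have : deriv (fun x => c * Real.sinh x - Real.sinh (c * x)) x
          = c * Real.cosh x - c * Real.cosh (c * x) := by
        have h1 : HasDerivAt (fun x => c * Real.sinh x - Real.sinh (c * x))
            (c * Real.cosh x - Real.cosh (c * x) * (c * 1)) x := by
          exact ((Real.hasDerivAt_sinh x).const_mul c).sub
            (((Real.hasDerivAt_sinh (c*x)).comp x ((hasDerivAt_id x).const_mul c)))
        rw [h1.deriv]; ring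
      rw [this]
      have : Real.cosh (c * x) < Real.cosh x := by
        rw [Real.cosh_lt_cosh]
        rw [abs_of_pos hx, abs_of_pos (by positivity)]
        nlinarith
      nlinarith
  have := hmono (Set.self_mem_Ici) (Set.mem_Ici.2 hr.le) hr
  simp at this
  linarith

theorem steinerRatioHyp_lt_sqrt_three_div_two (r : ℝ) (hr : 0 < r) :
    steinerRatioHyp r < Real.sqrt 3 / 2 ∧
      Real.sqrt 3 * r < arcosh (1 + 3 / 2 * Real.sinh r ^ 2) := by
  have h3 : Real.sqrt 3 ^ 2 = 3 := Real.sq_sqrt (by norm_num)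
  have h3lt : Real.sqrt 3 < 2 := by nlinarith [Real.sqrt_nonneg 3]
  have h3gt : 1 < Real.sqrt 3 := by nlinarith [Real.sqrt_nonneg 3]
  set c : ℝ := Real.sqrt 3 / 2 with hc
  have hc0 : 0 < c := by positivity
  have hc1 : c < 1 := by rw [hc]; linarith
  -- key: cosh (√3 r) < 1 + 3/2 sinh r ^ 2
  have hsinh := sinh_mul_lt c r hc0 hc1 hr
  have hsinh0 : 0 ≤ Real.sinh (c * r) := (Real.sinh_pos_iff.2 (by positivity)).le
  have hsq : Real.sinh (c * r) ^ 2 < c ^ 2 * Real.sinh r ^ 2 := by nlinarith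
  have hcsq : c ^ 2 = 3 / 4 := by rw [hc]; field_simp; nlinarith
  have hcoshkey : Real.cosh (Real.sqrt 3 * r) < 1 + 3 / 2 * Real.sinh r ^ 2 := by
    have h2 : Real.sqrt 3 * r = 2 * (c * r) := by rw [hc]; ring
    rw [h2, Real.cosh_two_mul]
    have := Real.cosh_sq (c * r)
    nlinarith
  set x : ℝ := 1 + 3 / 2 * Real.sinh r ^ 2 with hx
  have hx1 : (1:ℝ) ≤ x := by rw [hx]; nlinarith [sq_nonneg (Real.sinh r)]
  have hcosh1 : (1:ℝ) ≤ Real.cosh (Real.sqrt 3 * r) := Real.one_le_cosh _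
  -- exp (√3 r) = cosh + sinh = cosh + sqrt(cosh^2 - 1)
  have hsinhpos : 0 ≤ Real.sinh (Real.sqrt 3 * r) := (Real.sinh_pos_iff.2 (by positivity)).le
  have hexp : Real.exp (Real.sqrt 3 * r)
      = Real.cosh (Real.sqrt 3 * r) + Real.sqrt (Real.cosh (Real.sqrt 3 * r) ^ 2 - 1) := by
    have h1 : Real.cosh (Real.sqrt 3 * r) ^ 2 - 1 = Real.sinh (Real.sqrt 3 * r) ^ 2 := by
      have := Real.cosh_sq (Real.sqrt 3 * r); linarith
    rw [h1, Real.sqrt_sq hsinhpos, ← Real.cosh_add_sinh]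
  have hsqrtlt : Real.sqrt (Real.cosh (Real.sqrt 3 * r) ^ 2 - 1) < Real.sqrt (x ^ 2 - 1) :=
    Real.sqrt_lt_sqrt (by nlinarith) (by nlinarith)
  have hexplt : Real.exp (Real.sqrt 3 * r) < x + Real.sqrt (x ^ 2 - 1) := by
    rw [hexp]; exact add_lt_add hcoshkey hsqrtlt
  have harc : Real.sqrt 3 * r < arcosh x := by
    rw [arcosh, Real.lt_log_iff_exp_lt (by positivity)]
    exact hexplt
  refine ⟨?_, harc⟩
  have harcpos : 0 < arcosh x := lt_trans (by positivity) harc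
  rw [steinerRatioHyp, ← hx]
  rw [div_lt_iff₀ harcpos]
  have hmul : Real.sqrt 3 * Real.sqrt 3 = 3 := Real.mul_self_sqrt (by norm_num)
  have heq : (3:ℝ) / 2 * r = Real.sqrt 3 / 2 * (Real.sqrt 3 * r) := by
    linear_combination (- r / 2) * h3
  rw [heq]
  exact mul_lt_mul_of_pos_left harc (by positivity)
end
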